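/- arXiv:1602.02008 — 9 statements merged into one kernel-verified Lean document; each statement's English description precedes it below -/
import Mathlib

section
/- Let f = a₀ + Σⱼ aⱼ zⱼ with a₀,…,aₙ ∈ ℂ such that the coefficient vector (a₁,…,aₙ) is not a complex scalar multiple of any real vector (equivalently, the 2×n real matrix with rows (Re a₁,…,Re aₙ) and (Im a₁,…,Im aₙ) has rank 2). Then the imaginary projection of f is all of ℝⁿ. -/
/-!
If `a` is not a complex multiple of a real vector, the real span of `a₁, …, aₙ` is not contained
in a real line of `ℂ`, hence (as `ℂ` is a real plane) it is all of `ℂ`. So `x ↦ ∑ aⱼ xⱼ` maps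
`ℝⁿ` onto `ℂ`, and for any `y` we can choose `x ∈ ℝⁿ` with `∑ aⱼ xⱼ = -(a₀ + i ∑ aⱼ yⱼ)`;
then `z = x + i y` is a zero of `f` with `Im z = y`.
-/

open Module Submodule

theorem Submodule.span_range_eq_top_of_finrank_eq_two {K V ι : Type*} [Field K]
    [AddCommGroup V] [Module K V] [FiniteDimensional K V] (hV : finrank K V = 2) (v : ι → V)
    (hv : ¬∃ (c : V) (b : ι → K), v = fun i => b i • c) :
    span K (Set.range v) = ⊤ := by
  by_contra hne
  have hle : finrank K (span K (Set.range v)) ≤ 1 := by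
    have := Submodule.finrank_lt hne
    omega
  obtain ⟨c, hc⟩ := (Submodule.finrank_le_one_iff_isPrincipal _).1 hle
  have hmem (i : ι) : ∃ b : K, b • c = v i :=
    mem_span_singleton.1 (hc ▸ subset_span ⟨i, rfl⟩)
  choose b hb using hmem
  exact hv ⟨c, b, funext fun i => (hb i).symm⟩

theorem Complex.exists_sum_mul_ofReal_eq {ι : Type*} [Fintype ι] (a : ι → ℂ)
    (ha : ¬∃ (c : ℂ) (b : ι → ℝ), a = fun j => c * (b j : ℂ)) (w : ℂ) :
    ∃ x : ι → ℝ, ∑ j, a j * x j = w := by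
  have hspan : span ℝ (Set.range a) = ⊤ := by
    refine span_range_eq_top_of_finrank_eq_two Complex.finrank_real_complex a ?_
    rintro ⟨c, b, rfl⟩
    exact ha ⟨c, b, funext fun j => (Complex.real_smul).trans (mul_comm _ _)⟩
  obtain ⟨x, hx⟩ : w ∈ LinearMap.range (Fintype.linearCombination ℝ a) := by
    simp [Fintype.range_linearCombination, hspan]
  refine ⟨x, ?_⟩
  simpa [Fintype.linearCombination_apply, Complex.real_smul, mul_comm] using hx

theorem imagProj_affine_rank_two {n : ℕ} (a₀ : ℂ) (a : Fin n → ℂ)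
    (ha : ¬ ∃ (c : ℂ) (b : Fin n → ℝ), a = fun j => c * (b j : ℂ)) :
    {y : Fin n → ℝ | ∃ z : Fin n → ℂ,
        a₀ + ∑ j, a j * z j = 0 ∧ (fun j => (z j).im) = y} = Set.univ := by
  refine Set.eq_univ_of_forall fun y => ?_
  obtain ⟨x, hx⟩ :=
    Complex.exists_sum_mul_ofReal_eq a ha (-(a₀ + ∑ j, a j * (y j * Complex.I)))
  refine ⟨fun j => x j + y j * Complex.I, ?_, ?_⟩
  · simp only [mul_add, Finset.sum_add_distrib, hx]
    ring
  · funext j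
    simp
end

section
/- For any integers n > 0 and t > 0, there exists a polynomial f ∈ ℝ[z₁,…,zₙ] such that the complement of the imaginary projection 𝓘(f) has exactly t bounded connected components. -/
open MvPolynomial

/-- The imaginary projection of a polynomial `f ∈ ℂ[z₁,…,zₙ]`. -/
def imagProj {n : ℕ} (f : MvPolynomial (Fin n) ℂ) : Set (Fin n → ℝ) :=
  {y | ∃ z : Fin n → ℂ, eval z f = 0 ∧ (fun j => (z j).im) = y}

open Set Complex


/-- grid points -/
def gridS (m : ℕ) : Set ℝ := {s | ∃ k ≤ m, s = 2 * k - m}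

lemma Ioo_subset_compl {m k : ℕ} (hk : k < m) :
    Ioo (2*k - m : ℝ) (2*k + 2 - m) ⊆ (gridS m)ᶜ := by
  rintro s ⟨h1, h2⟩ ⟨k', hk', rfl⟩
  have hlt : (k : ℝ) < k' := by linarith
  have hlt2 : (k' : ℝ) < k + 1 := by linarith
  have := Nat.cast_lt.mp hlt
  have : k' < k + 1 := by exact_mod_cast hlt2
  omega

lemma mem_gridS {m k : ℕ} (hk : k ≤ m) : (2*k - m : ℝ) ∈ gridS m := ⟨k, hk, rfl⟩

lemma neg_mem_gridS {m k : ℕ} (hk : k ≤ m) : (-(2*k - m) : ℝ) ∈ gridS m := by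
  refine ⟨m - k, Nat.sub_le _ _, ?_⟩
  push_cast [Nat.cast_sub hk]
  ring

lemma oneD_comp {m k : ℕ} (hk : k < m) {y : ℝ}
    (hy : y ∈ Ioo (2*k - m : ℝ) (2*k + 2 - m)) :
    connectedComponentIn (gridS m)ᶜ y = Ioo (2*k - m : ℝ) (2*k + 2 - m) := by
  apply subset_antisymm
  · intro w hw
    have hoc : OrdConnected (connectedComponentIn (gridS m)ᶜ y) :=
      isPreconnected_connectedComponentIn.ordConnected
    have hsub := connectedComponentIn_subset (gridS m)ᶜ y
    have hymem : y ∈ connectedComponentIn (gridS m)ᶜ y :=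
      mem_connectedComponentIn (Ioo_subset_compl hk hy)
    constructor
    · by_contra hle
      push_neg at hle
      have : (2*k - m : ℝ) ∈ connectedComponentIn (gridS m)ᶜ y :=
        hoc.out' hw hymem ⟨hle, le_of_lt hy.1⟩
      exact (hsub this) (mem_gridS hk.le)
    · by_contra hle
      push_neg at hle
      have : (2*k + 2 - m : ℝ) ∈ connectedComponentIn (gridS m)ᶜ y := by
        have : (2*k + 2 - m : ℝ) = 2*(k+1) - m := by push_cast; ring
        rw [this] at hle ⊢
        exact hoc.out' hymem hw ⟨le_of_lt (by push_cast; push_cast at hy; linarith [hy.2]), hle⟩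
      exact (hsub this) ⟨k+1, hk, by push_cast; ring⟩
  · exact isPreconnected_Ioo.subset_connectedComponentIn hy (Ioo_subset_compl hk)

lemma Iio_subset_compl (m : ℕ) : Iio (-(m:ℝ)) ⊆ (gridS m)ᶜ := by
  rintro s hs ⟨k, hk, rfl⟩
  simp only [mem_Iio] at hs
  have : (0:ℝ) ≤ 2*k := by positivity
  linarith

lemma Ioi_subset_compl (m : ℕ) : Ioi (m:ℝ) ⊆ (gridS m)ᶜ := by
  rintro s hs ⟨k, hk, rfl⟩
  simp only [mem_Ioi] at hs
  have : (k:ℝ) ≤ m := by exact_mod_cast hk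
  linarith

lemma oneD_cases {m : ℕ} {y : ℝ} (hy : y ∉ gridS m) :
    y < -m ∨ (m:ℝ) < y ∨ ∃ k < m, y ∈ Ioo (2*k - m : ℝ) (2*k + 2 - m) := by
  by_contra h
  push_neg at h
  obtain ⟨h1, h2, h3⟩ := h
  have hym : -(m:ℝ) < y := by
    rcases eq_or_lt_of_le h1 with he | hl
    · exact absurd (show y ∈ gridS m by rw [← he]; exact ⟨0, Nat.zero_le _, by push_cast; ring⟩) hy
    · exact hl
  have hym2 : y < m := by
    rcases eq_or_lt_of_le h2 with he | hl
    · refine absurd ?_ hy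
      rw [he]
      have : ((m:ℝ)) = 2*m - m := by ring
      rw [this]; exact mem_gridS le_rfl
    · exact hl
  set k := Nat.floor ((y + m)/2) with hkdef
  have hnn : (0:ℝ) ≤ (y + m)/2 := by linarith
  have hfl : (k:ℝ) ≤ (y + m)/2 := Nat.floor_le hnn
  have hfu : (y + m)/2 < k + 1 := Nat.lt_floor_add_one _
  have hkm : k < m := by
    have : (k:ℝ) < m := by linarith
    exact_mod_cast this
  have hne : y ≠ 2*k - m := fun he => hy (he ▸ mem_gridS hkm.le)
  have hlow : 2*(k:ℝ) - m < y := lt_of_le_of_ne (by linarith) (Ne.symm hne)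
  exact h3 k hkm ⟨hlow, by linarith⟩

lemma comp_pi {n : ℕ} {S : Fin n → Set ℝ} {y : Fin n → ℝ} (hy : y ∈ univ.pi S) :
    connectedComponentIn (univ.pi S) y =
      univ.pi (fun j => connectedComponentIn (S j) (y j)) := by
  apply subset_antisymm
  · intro w hw j _
    have hconn := isPreconnected_connectedComponentIn (x := y) (F := univ.pi S)
    have himg : IsPreconnected ((fun v : Fin n → ℝ => v j) '' connectedComponentIn (univ.pi S) y) :=
      hconn.image _ (continuous_apply j).continuousOn
    have hsub : ((fun v : Fin n → ℝ => v j) '' connectedComponentIn (univ.pi S) y) ⊆ S j := by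
      rintro _ ⟨v, hv, rfl⟩
      exact connectedComponentIn_subset _ _ hv j (mem_univ j)
    have hymem : y j ∈ (fun v : Fin n → ℝ => v j) '' connectedComponentIn (univ.pi S) y :=
      ⟨y, mem_connectedComponentIn hy, rfl⟩
    exact himg.subset_connectedComponentIn hymem hsub ⟨w, hw, rfl⟩
  · have hpc : IsPreconnected (univ.pi fun j => connectedComponentIn (S j) (y j)) :=
      isPreconnected_univ_pi fun j => isPreconnected_connectedComponentIn
    refine hpc.subset_connectedComponentIn ?_ ?_
    · exact fun j _ => mem_connectedComponentIn (hy j (mem_univ j))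
    · intro w hw j _
      exact connectedComponentIn_subset _ _ (hw j (mem_univ j))

lemma not_bounded_of_Iio {s : Set ℝ} {a : ℝ} (h : Iio a ⊆ s) : ¬ Bornology.IsBounded s :=
  fun hb => not_bddBelow_Iio (α := ℝ) (a := a)
    (BddBelow.mono h hb.bddBelow)

lemma not_bounded_of_Ioi {s : Set ℝ} {a : ℝ} (h : Ioi a ⊆ s) : ¬ Bornology.IsBounded s :=
  fun hb => not_bddAbove_Ioi (α := ℝ) (a := a)
    (BddAbove.mono h hb.bddAbove)

noncomputable def thePoly (n : ℕ) (m : Fin n → ℕ) : MvPolynomial (Fin n) ℝ :=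
  ∏ j : Fin n, ∏ k ∈ Finset.range (m j + 1), (X j ^ 2 + C ((2*(k:ℝ) - m j)^2))

lemma sq_add_sq_eq_zero (z : ℂ) (r : ℝ) :
    z^2 + (r:ℂ)^2 = 0 ↔ z = r * I ∨ z = -(r * I) := by
  have key : z^2 + (r:ℂ)^2 = (z - r*I) * (z + r*I) := by
    linear_combination ((r:ℂ)^2) * Complex.I_sq
  rw [key, mul_eq_zero, sub_eq_zero, add_eq_zero_iff_eq_neg]


lemma eval_thePoly {n : ℕ} (m : Fin n → ℕ) (z : Fin n → ℂ) :
    eval z (map (algebraMap ℝ ℂ) (thePoly n m)) =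
      ∏ j : Fin n, ∏ k ∈ Finset.range (m j + 1),
        ((z j)^2 + (((2*(k:ℝ) - m j : ℝ) : ℂ))^2) := by
  simp [thePoly, map_prod, map_add, map_pow]

lemma imagProj_thePoly {n : ℕ} (m : Fin n → ℕ) :
    imagProj (map (algebraMap ℝ ℂ) (thePoly n m)) = {y | ∃ j, y j ∈ gridS (m j)} := by
  ext y
  constructor
  · rintro ⟨z, hz, rfl⟩
    rw [eval_thePoly] at hz
    rw [Finset.prod_eq_zero_iff] at hz
    obtain ⟨j, -, hj⟩ := hz
    rw [Finset.prod_eq_zero_iff] at hj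
    obtain ⟨k, hk, hzero⟩ := hj
    have hkm : k ≤ m j := Nat.lt_succ_iff.mp (Finset.mem_range.mp hk)
    rcases (sq_add_sq_eq_zero _ _).mp hzero with h | h
    · exact ⟨j, by simp only []; rw [h]; simpa using mem_gridS hkm⟩
    · exact ⟨j, by simp only []; rw [h]; simpa using neg_mem_gridS hkm⟩
  · rintro ⟨j0, hj0⟩
    obtain ⟨k, hk, hy⟩ := hj0
    refine ⟨fun j => (y j : ℂ) * I, ?_, by funext j; simp⟩
    rw [eval_thePoly]
    apply Finset.prod_eq_zero (Finset.mem_univ j0)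
    apply Finset.prod_eq_zero (Finset.mem_range.mpr (Nat.lt_succ_of_le hk))
    rw [hy]
    have key : ∀ c : ℂ, (c*I)^2 + c^2 = 0 := fun c => by linear_combination c^2 * Complex.I_sq
    exact key _

def gridBox {n : ℕ} (m g : Fin n → ℕ) : Set (Fin n → ℝ) :=
  univ.pi fun j => Ioo (2*(g j) - m j : ℝ) (2*(g j) + 2 - m j)

def gridU {n : ℕ} (m : Fin n → ℕ) : Set (Fin n → ℝ) := univ.pi fun j => (gridS (m j))ᶜ

lemma compl_imagProj {n : ℕ} (m : Fin n → ℕ) :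
    (imagProj (map (algebraMap ℝ ℂ) (thePoly n m)))ᶜ = gridU m := by
  rw [imagProj_thePoly]
  ext y
  simp [gridU, not_exists]

lemma midpoint_mem {n : ℕ} (m g : Fin n → ℕ) (j : Fin n) :
    (2*(g j) + 1 - m j : ℝ) ∈ Ioo (2*(g j) - m j : ℝ) (2*(g j) + 2 - m j) :=
  ⟨by linarith, by linarith⟩

lemma components_eq {n : ℕ} (m : Fin n → ℕ) :
    {C : Set (Fin n → ℝ) | (∃ y ∈ gridU m, C = connectedComponentIn (gridU m) y) ∧
        Bornology.IsBounded C}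
      = gridBox m '' {g | ∀ j, g j < m j} := by
  ext C
  constructor
  · rintro ⟨⟨y, hy, rfl⟩, hb⟩
    rw [gridU] at hb ⊢
    rw [comp_pi hy] at hb ⊢
    have hbj : ∀ j, Bornology.IsBounded (connectedComponentIn (gridS (m j))ᶜ (y j)) := by
      rcases (Bornology.isBounded_pi).mp hb with ⟨i, hi⟩ | h
      · exfalso
        rw [eq_empty_iff_forall_notMem] at hi
        exact hi _ (mem_connectedComponentIn (hy i (mem_univ i)))
      · exact h
    have hcase : ∀ j, ∃ k, k < m j ∧ y j ∈ Ioo (2*k - m j : ℝ) (2*k + 2 - m j) := by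
      intro j
      rcases oneD_cases (hy j (mem_univ j)) with h | h | ⟨k, hk, hk2⟩
      · exact absurd (hbj j)
          (not_bounded_of_Iio (ordConnected_Iio.isPreconnected.subset_connectedComponentIn h
            (Iio_subset_compl (m j))))
      · exact absurd (hbj j)
          (not_bounded_of_Ioi (ordConnected_Ioi.isPreconnected.subset_connectedComponentIn h
            (Ioi_subset_compl (m j))))
      · exact ⟨k, hk, hk2⟩
    choose g hg1 hg2 using hcase
    refine ⟨g, hg1, ?_⟩
    rw [gridBox]
    rw [show (fun j => Ioo (2*(g j) - m j : ℝ) (2*(g j) + 2 - m j))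
        = fun j => connectedComponentIn (gridS (m j))ᶜ (y j) from
      funext fun j => (oneD_comp (hg1 j) (hg2 j)).symm]
  · rintro ⟨g, hg, rfl⟩
    set y : Fin n → ℝ := fun j => 2*(g j) + 1 - m j with hydef
    have hyU : y ∈ gridU m := fun j _ => Ioo_subset_compl (hg j) (midpoint_mem m g j)
    refine ⟨⟨y, hyU, ?_⟩, ?_⟩
    · rw [gridU] at hyU ⊢
      rw [comp_pi hyU, gridBox]
      rw [show (fun j => Ioo (2*(g j) - m j : ℝ) (2*(g j) + 2 - m j))
          = fun j => connectedComponentIn (gridS (m j))ᶜ (y j) from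
        funext fun j => (oneD_comp (hg j) (midpoint_mem m g j)).symm]
    · rw [gridBox, Bornology.isBounded_pi]
      exact Or.inr fun i => Metric.isBounded_Ioo _ _

lemma gridBox_injOn {n : ℕ} (m : Fin n → ℕ) :
    Function.Injective (gridBox m) := by
  intro g g' h
  funext j
  have hmem : (fun j => (2*(g j) + 1 - m j : ℝ)) ∈ gridBox m g :=
    fun i _ => midpoint_mem m g i
  rw [h] at hmem
  have := hmem j (mem_univ j)
  simp only [mem_Ioo] at this
  have h1 : 2*(g' j) < 2*(g j) + 1 := by
    have : (2*(g' j) : ℝ) < 2*(g j) + 1 := by linarith [this.1]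
    exact_mod_cast this
  have h2 : 2*(g j) + 1 < 2*(g' j) + 2 := by
    have : (2*(g j) + 1 : ℝ) < 2*(g' j) + 2 := by linarith [this.2]
    exact_mod_cast this
  omega

lemma gridG_ncard {n : ℕ} (m : Fin n → ℕ) :
    {g : Fin n → ℕ | ∀ j, g j < m j}.ncard = ∏ j, m j := by
  have : {g : Fin n → ℕ | ∀ j, g j < m j}
      = ↑(Fintype.piFinset fun j => Finset.range (m j)) := by
    ext g
    simp [Fintype.mem_piFinset]
  rw [this, Set.ncard_coe_finset, Fintype.card_piFinset]
  simp

theorem exists_poly_with_t_bounded_complement_components (n t : ℕ)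
    (hn : 0 < n) (ht : 0 < t) :
    ∃ f : MvPolynomial (Fin n) ℝ,
      {C : Set (Fin n → ℝ) |
          (∃ y ∈ (imagProj (map (algebraMap ℝ ℂ) f))ᶜ,
            C = connectedComponentIn (imagProj (map (algebraMap ℝ ℂ) f))ᶜ y) ∧
          Bornology.IsBounded C}.ncard = t := by
  set m : Fin n → ℕ := fun j => if (j : ℕ) = 0 then t else 1 with hmdef
  refine ⟨thePoly n m, ?_⟩
  rw [compl_imagProj, components_eq, Set.ncard_image_of_injOn
    ((gridBox_injOn m).injOn), gridG_ncard]
  rw [Finset.prod_eq_single_of_mem (⟨0, hn⟩ : Fin n) (Finset.mem_univ _)]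
  · simp [hmdef]
  · intro b _ hb
    simp only [hmdef]
    rw [if_neg]
    intro hb0
    exact hb (Fin.ext hb0)
end

section
/- Let f ∈ ℝ[z₁,…,zₙ] be homogeneous and nonzero. Then 𝓘(f) ≠ ℝⁿ if and only if f is hyperbolic with respect to some vector e ∈ ℝⁿ. -/
open MvPolynomial

/-!
If `f` is homogeneous, `𝓘(f)` is a cone: a zero `z` can be rescaled by any real number. Hence a
zero of `t ↦ f(x + t e)` with `Im t ≠ 0` puts `e` into `𝓘(f)`, as does `f(e) = 0` (through the zero
`i e`); conversely a zero `x + i e` of `f` is a non-real root `t = i`. So `e ∉ 𝓘(f)` says exactly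
that `f` is hyperbolic in direction `e`.
-/

theorem MvPolynomial.IsHomogeneous.eval_smul {σ R : Type*} [CommSemiring R]
    {φ : MvPolynomial σ R} {d : ℕ} (hφ : φ.IsHomogeneous d) (c : R) (x : σ → R) :
    eval (c • x) φ = c ^ d * eval x φ := by
  rw [eval_eq, eval_eq, Finset.mul_sum]
  refine Finset.sum_congr rfl fun m hm => ?_
  have hdeg : ∑ i ∈ m.support, m i = d := by
    rw [← Finsupp.degree_apply, Finsupp.degree_eq_weight_one]
    exact hφ (mem_support_iff.mp hm)
  simp only [Pi.smul_apply, smul_eq_mul, mul_pow, Finset.prod_mul_distrib,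
    Finset.prod_pow_eq_pow_sum, hdeg]
  ring

/-- Real-rootedness of `t ↦ f(x + t e)` is phrased as: every complex root is real. -/
def MvPolynomial.IsHyperbolicIn {n : ℕ} (f : MvPolynomial (Fin n) ℝ) (e : Fin n → ℝ) : Prop :=
  eval e f ≠ 0 ∧ ∀ x : Fin n → ℝ, ∀ t : ℂ,
    eval (fun j => (x j : ℂ) + t * (e j : ℂ)) (map (algebraMap ℝ ℂ) f) = 0 → t.im = 0

section imagProj

variable {n : ℕ} {F : MvPolynomial (Fin n) ℂ}

theorem mem_imagProj_iff {y : Fin n → ℝ} :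
    y ∈ imagProj F ↔ ∃ x : Fin n → ℝ, eval (fun j => (x j : ℂ) + Complex.I * (y j : ℂ)) F = 0 := by
  constructor
  · rintro ⟨z, hz, rfl⟩
    refine ⟨fun j => (z j).re, ?_⟩
    simpa only [mul_comm Complex.I, Complex.re_add_im] using hz
  · rintro ⟨x, hx⟩
    refine ⟨_, hx, ?_⟩
    funext j
    simp

theorem smul_mem_imagProj {d : ℕ} (hF : F.IsHomogeneous d) {y : Fin n → ℝ}
    (hy : y ∈ imagProj F) (c : ℝ) : c • y ∈ imagProj F := by
  obtain ⟨z, hz, rfl⟩ := hy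
  refine ⟨(c : ℂ) • z, by rw [hF.eval_smul, hz, mul_zero], ?_⟩
  funext j
  simp

end imagProj

theorem notMem_imagProj_iff_isHyperbolicIn {n d : ℕ} {f : MvPolynomial (Fin n) ℝ}
    (hf : f.IsHomogeneous d) {e : Fin n → ℝ} :
    e ∉ imagProj (map (algebraMap ℝ ℂ) f) ↔ f.IsHyperbolicIn e := by
  have hF := hf.map (algebraMap ℝ ℂ)
  constructor
  · intro he
    refine ⟨fun hfe => he (mem_imagProj_iff.mpr ⟨0, ?_⟩), fun x t hxt => ?_⟩
    · have hIe : (fun j => ((0 : Fin n → ℝ) j : ℂ) + Complex.I * (e j : ℂ))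
          = Complex.I • fun j => (e j : ℂ) := by
        funext j
        simp
      rw [hIe, hF.eval_smul, eval_map, show (fun j => (e j : ℂ)) = algebraMap ℝ ℂ ∘ e from rfl,
        ← eval₂_comp, hfe, map_zero, mul_zero]
    · by_contra ht
      have hmem : t.im • e ∈ imagProj (map (algebraMap ℝ ℂ) f) :=
        ⟨_, hxt, by funext j; simp⟩
      apply he
      simpa [smul_smul, inv_mul_cancel₀ ht] using smul_mem_imagProj hF hmem (t.im)⁻¹
  · rintro ⟨-, hreal⟩ he
    obtain ⟨x, hx⟩ := mem_imagProj_iff.mp he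
    simpa using hreal x Complex.I hx

theorem imagProj_ne_univ_iff_hyperbolic_general {n d : ℕ} (f : MvPolynomial (Fin n) ℝ)
    (hhom : f.IsHomogeneous d) :
    imagProj (map (algebraMap ℝ ℂ) f) ≠ Set.univ
      ↔ ∃ e : Fin n → ℝ, eval e f ≠ 0 ∧
          ∀ x : Fin n → ℝ, ∀ t : ℂ,
            eval (fun j => (x j : ℂ) + t * (e j : ℂ)) (map (algebraMap ℝ ℂ) f) = 0
              → t.im = 0 := by
  rw [Ne, Set.eq_univ_iff_forall, not_forall]
  exact exists_congr fun e => notMem_imagProj_iff_isHyperbolicIn hhom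

theorem imagProj_ne_univ_iff_hyperbolic {n d : ℕ} (f : MvPolynomial (Fin n) ℝ)
    (hf : f ≠ 0) (hhom : f.IsHomogeneous d) :
    imagProj (map (algebraMap ℝ ℂ) f) ≠ Set.univ
      ↔ ∃ e : Fin n → ℝ, eval e f ≠ 0 ∧
          ∀ x : Fin n → ℝ, ∀ t : ℂ,
            eval (fun j => (x j : ℂ) + t * (e j : ℂ)) (map (algebraMap ℝ ℂ) f) = 0
              → t.im = 0 :=
  imagProj_ne_univ_iff_hyperbolic_general f hhom
end

section
/- For f(z₁,z₂) = z₁² + z₂² + 1, the imaginary projection is the closed exterior of the unit disc: 𝓘(f) = {(y₁,y₂) ∈ ℝ² : y₁² + y₂² ≥ 1}. -/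
theorem imagProj_circle_plus_one :
    {p : ℝ × ℝ | ∃ z₁ z₂ : ℂ, z₁ ^ 2 + z₂ ^ 2 + 1 = 0 ∧ z₁.im = p.1 ∧ z₂.im = p.2}
      = {p : ℝ × ℝ | 1 ≤ p.1 ^ 2 + p.2 ^ 2} := by
  ext p
  simp only [Set.mem_setOf_eq]
  constructor
  · rintro ⟨z₁, z₂, h, h1, h2⟩
    rw [Complex.ext_iff] at h
    obtain ⟨hre, _⟩ := h
    simp only [Complex.add_re, Complex.one_re, Complex.zero_re, pow_two,
      Complex.mul_re] at hre
    rw [← h1, ← h2]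
    nlinarith [sq_nonneg z₁.re, sq_nonneg z₂.re, sq_nonneg z₁.im, sq_nonneg z₂.im]
  · intro hp
    set s := p.1 ^ 2 + p.2 ^ 2 with hs
    have hs0 : (0 : ℝ) < s := by linarith
    set t := Real.sqrt ((s - 1) / s) with ht
    have ht2 : t ^ 2 = (s - 1) / s := by
      rw [ht, Real.sq_sqrt]
      exact div_nonneg (by linarith) hs0.le
    have hts : t ^ 2 * s = s - 1 := by
      rw [ht2, div_mul_cancel₀]
      exact ne_of_gt hs0
    refine ⟨⟨-t * p.2, p.1⟩, ⟨t * p.1, p.2⟩, ?_, rfl, rfl⟩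
    rw [Complex.ext_iff]
    constructor
    · simp only [Complex.add_re, Complex.one_re, Complex.zero_re, pow_two,
        Complex.mul_re]
      simp only [hs, pow_two] at hts
      nlinarith [hts]
    · simp only [Complex.add_im, Complex.one_im, Complex.zero_im, pow_two,
        Complex.mul_im]
      ring
end

section
/- For f(z₁,z₂) = z₁² − z₂² − 1, the imaginary projection is 𝓘(f) = {(y₁,y₂) ∈ ℝ² : −1 ≤ y₁² − y₂² < 0} ∪ {(0,0)}. -/
/-!
Write `z₁ = a + b i`, `z₂ = c + d i` and `s = b² - d²`. The equation `z₁² - z₂² = 1` says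
`a² - c² = 1 + s` and `ab = cd`; eliminating `a²` resp. `c²` from `a²b² = c²d²` gives
`(1 + s) b² + c² s = 0` and `a² s + (1 + s) d² = 0`. If `s ≥ 0` both sums of nonnegative terms force
`b = d = 0`, and if `s < -1` the second forces `d = 0`, hence `s = b² ≥ 0`, a contradiction.
Conversely, for `-1 ≤ y₁² - y₂² < 0` the points `z₁ = t y₂ + y₁ i`, `z₂ = t y₁ + y₂ i` satisfy
`z₁² - z₂² = (y₂² - y₁²)(t² + 1)`, and `t` can be chosen to make this `1`.
-/

open Complex

lemma sq_sub_sq_mem_Ico_of_mul_eq_mul {a b c d : ℝ} (hre : a ^ 2 - b ^ 2 - (c ^ 2 - d ^ 2) = 1)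
    (him : a * b = c * d) (hbd : (b, d) ≠ (0, 0)) :
    b ^ 2 - d ^ 2 ∈ Set.Ico (-1) 0 := by
  set s := b ^ 2 - d ^ 2
  have hB : (1 + s) * b ^ 2 + c ^ 2 * s = 0 := by
    linear_combination (a * b + c * d) * him - b ^ 2 * hre
  have hD : a ^ 2 * s + (1 + s) * d ^ 2 = 0 := by
    linear_combination (a * b + c * d) * him - d ^ 2 * hre
  constructor
  · by_contra! h
    have hd : d ^ 2 = 0 := by nlinarith [sq_nonneg a, sq_nonneg d]
    nlinarith [sq_nonneg b]
  · by_contra! h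
    have hd : d ^ 2 = 0 := by nlinarith [sq_nonneg a, sq_nonneg d]
    have hb : b ^ 2 = 0 := by nlinarith [sq_nonneg b, sq_nonneg c]
    simp only [pow_eq_zero_iff two_ne_zero] at hb hd
    exact hbd (by rw [hb, hd])

lemma im_sq_sub_im_sq_mem_Ico {z w : ℂ} (h : z ^ 2 - w ^ 2 = 1) (hne : (z.im, w.im) ≠ (0, 0)) :
    z.im ^ 2 - w.im ^ 2 ∈ Set.Ico (-1) 0 := by
  obtain ⟨hre, him⟩ := Complex.ext_iff.mp h
  simp only [sq, sub_re, sub_im, mul_re, mul_im, one_re, one_im] at hre him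
  exact sq_sub_sq_mem_Ico_of_mul_eq_mul (a := z.re) (c := w.re) (by linear_combination hre)
    (by linear_combination him / 2) hne

lemma exists_sq_sub_sq_eq_one_of_mem_Ico {y₁ y₂ : ℝ} (hy : y₁ ^ 2 - y₂ ^ 2 ∈ Set.Ico (-1) 0) :
    ∃ z w : ℂ, z ^ 2 - w ^ 2 = 1 ∧ z.im = y₁ ∧ w.im = y₂ := by
  set t := √((y₂ ^ 2 - y₁ ^ 2)⁻¹ - 1)
  have ht : t ^ 2 = (y₂ ^ 2 - y₁ ^ 2)⁻¹ - 1 :=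
    Real.sq_sqrt (sub_nonneg.mpr (one_le_inv₀ (by linarith [hy.2]) |>.mpr (by linarith [hy.1])))
  refine ⟨t * y₂ + y₁ * I, t * y₁ + y₂ * I, ?_, by simp, by simp⟩
  have hne : y₂ ^ 2 - y₁ ^ 2 ≠ 0 := by linarith [hy.2]
  calc (t * y₂ + y₁ * I : ℂ) ^ 2 - (t * y₁ + y₂ * I) ^ 2
        = ((y₂ ^ 2 - y₁ ^ 2) * (t ^ 2 + 1) : ℝ) := by
        push_cast; linear_combination (y₁ ^ 2 - y₂ ^ 2 : ℂ) * I_sq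
    _ = 1 := by rw [ht, sub_add_cancel, mul_inv_cancel₀ hne, ofReal_one]

theorem imagProj_hyperbola :
    {p : ℝ × ℝ | ∃ z₁ z₂ : ℂ, z₁ ^ 2 - z₂ ^ 2 - 1 = 0 ∧ z₁.im = p.1 ∧ z₂.im = p.2}
      = {p : ℝ × ℝ | -1 ≤ p.1 ^ 2 - p.2 ^ 2 ∧ p.1 ^ 2 - p.2 ^ 2 < 0}
          ∪ {((0 : ℝ), (0 : ℝ))} := by
  ext ⟨y₁, y₂⟩
  simp only [Set.mem_ofPred_eq, Set.mem_union, Set.mem_singleton_iff, sub_eq_zero]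
  constructor
  · rintro ⟨z₁, z₂, h, rfl, rfl⟩
    by_cases h0 : (z₁.im, z₂.im) = (0, 0)
    · exact Or.inr h0
    · exact Or.inl (im_sq_sub_im_sq_mem_Ico h h0)
  · rintro (hy | h0)
    · exact exists_sq_sub_sq_eq_one_of_mem_Ico hy
    · obtain ⟨rfl, rfl⟩ := Prod.mk.inj h0
      exact ⟨1, 0, by norm_num, by simp, by simp⟩
end

section
/- For f(z₁,z₂) = z₁² + z₂ (a parabola), the imaginary projection is 𝓘(f) = ℝ² \ {(0,y₂) : y₂ ≠ 0}. -/
theorem imagProj_parabola :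
    {p : ℝ × ℝ | ∃ z₁ z₂ : ℂ, z₁ ^ 2 + z₂ = 0 ∧ z₁.im = p.1 ∧ z₂.im = p.2}
      = Set.univ \ {p : ℝ × ℝ | p.1 = 0 ∧ p.2 ≠ 0} := by
  ext ⟨y₁, y₂⟩
  simp only [Set.mem_setOf_eq, Set.mem_diff, Set.mem_univ, true_and, not_and, not_not]
  constructor
  · rintro ⟨z₁, z₂, heq, h1, h2⟩ hy1
    have hz2 : z₂ = -z₁ ^ 2 := by linear_combination heq
    have : z₂.im = -(2 * z₁.re * z₁.im) := by
      rw [hz2]; simp [pow_two, Complex.mul_im]; ring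
    rw [h2, h1, hy1] at this
    simpa using this
  · intro h
    by_cases hy1 : y₁ = 0
    · refine ⟨⟨0, 0⟩, 0, by simp [pow_two, Complex.ext_iff], by simp [hy1], by simp [h hy1]⟩
    · set x₁ : ℝ := -y₂ / (2 * y₁) with hx
      refine ⟨⟨x₁, y₁⟩, -(⟨x₁, y₁⟩ : ℂ) ^ 2, by ring, rfl, ?_⟩
      show -(((⟨x₁, y₁⟩ : ℂ)) ^ 2).im = y₂
      rw [pow_two, Complex.mul_im]
      show -(x₁ * y₁ + y₁ * x₁) = y₂
      rw [hx]
      field_simp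
      ring
end

section
/- Let n ≥ 3 and f(z) = Σ_{j=1}^{n} zⱼ² + 1. Then 𝓘(f) = {y ∈ ℝⁿ : Σ_{j=1}^{n} yⱼ² ≥ 1}. -/
/-!
Writing `z = x + i y` with `x y : ℝⁿ`, the equation `∑ zⱼ² + 1 = 0` splits into
`‖x‖² + 1 = ‖y‖²` and `⟪x, y⟫ = 0`. Hence `‖y‖ ≥ 1` is necessary, and it is sufficient because
in dimension at least two the orthogonal complement of `y` is nonzero, so it contains a vector of
any prescribed length, in particular of length `√(‖y‖² - 1)`.
-/
open Module Finset

theorem exists_inner_eq_zero_norm_eq {𝕜 E : Type*} [RCLike 𝕜] [NormedAddCommGroup E]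
    [InnerProductSpace 𝕜 E] [FiniteDimensional 𝕜 E] (hE : 2 ≤ finrank 𝕜 E) (v : E) {r : ℝ}
    (hr : 0 ≤ r) : ∃ w : E, inner 𝕜 v w = 0 ∧ ‖w‖ = r := by
  have hcompl : 0 < finrank 𝕜 (𝕜 ∙ v)ᗮ := by
    have hsum := (𝕜 ∙ v).finrank_add_finrank_orthogonal
    have hspan := finrank_span_le_card (R := 𝕜) ({v} : Set E)
    simp only [Set.toFinset_singleton, card_singleton] at hspan
    omega
  obtain ⟨⟨u, hu⟩, hu_ne⟩ := finrank_pos_iff_exists_ne_zero.mp hcompl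
  have hu0 : u ≠ 0 := by simpa using hu_ne
  refine ⟨((r / ‖u‖ : ℝ) : 𝕜) • u, ?_, ?_⟩
  · rw [inner_smul_right, Submodule.mem_orthogonal_singleton_iff_inner_right.mp hu, mul_zero]
  · rw [norm_smul, RCLike.norm_ofReal, abs_of_nonneg (by positivity),
      div_mul_cancel₀ _ (norm_ne_zero_iff.mpr hu0)]

theorem exists_sum_mul_eq_zero_sum_sq_eq {ι : Type*} [Fintype ι] (hι : 2 ≤ Fintype.card ι)
    (y : ι → ℝ) {r : ℝ} (hr : 0 ≤ r) : ∃ x : ι → ℝ, ∑ j, x j * y j = 0 ∧ ∑ j, x j ^ 2 = r := by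
  obtain ⟨x, hxy, hx⟩ := exists_inner_eq_zero_norm_eq (by rwa [finrank_euclideanSpace])
    (WithLp.toLp 2 y : EuclideanSpace ℝ ι) (Real.sqrt_nonneg r)
  refine ⟨x, ?_, ?_⟩
  · simpa [PiLp.inner_apply] using hxy
  · rw [← EuclideanSpace.real_norm_sq_eq, hx, Real.sq_sqrt hr]

theorem Complex.sum_sq_add_one_eq_zero_iff {ι : Type*} [Fintype ι] (z : ι → ℂ) :
    ∑ j, z j ^ 2 + 1 = 0 ↔
      ∑ j, (z j).re ^ 2 + 1 = ∑ j, (z j).im ^ 2 ∧ ∑ j, (z j).re * (z j).im = 0 := by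
  have him : ∑ j, ((z j).re * (z j).im + (z j).im * (z j).re) = 2 * ∑ j, (z j).re * (z j).im := by
    rw [mul_sum]; exact sum_congr rfl fun j _ => by ring
  simp only [Complex.ext_iff, add_re, re_sum, im_sum, add_im, one_re, one_im, zero_re, zero_im, sq,
    mul_re, mul_im, sum_sub_distrib, him]
  constructor <;> rintro ⟨h1, h2⟩ <;> constructor <;> linarith

theorem imagProj_sphere_plus_one (n : ℕ) :
    {y : Fin (n + 3) → ℝ | ∃ z : Fin (n + 3) → ℂ,
        (∑ j, z j ^ 2) + 1 = 0 ∧ (fun j => (z j).im) = y}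
      = {y : Fin (n + 3) → ℝ | 1 ≤ ∑ j, y j ^ 2} := by
  ext y
  simp only [Set.mem_ofPred_eq]
  constructor
  · rintro ⟨z, hz, rfl⟩
    have h0 : 0 ≤ ∑ j, (z j).re ^ 2 := sum_nonneg fun j _ => sq_nonneg _
    linarith [((Complex.sum_sq_add_one_eq_zero_iff z).mp hz).1]
  · intro hy
    obtain ⟨x, hxy, hx⟩ := exists_sum_mul_eq_zero_sum_sq_eq (by simp) y (sub_nonneg.mpr hy)
    refine ⟨fun j => ⟨x j, y j⟩, (Complex.sum_sq_add_one_eq_zero_iff _).mpr ⟨?_, hxy⟩, rfl⟩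
    simp only [hx]
    ring
end

section
/- Let n ≥ 3 and f(z) = z₁² − Σ_{j=2}^{n} zⱼ² + 1. Then 𝓘(f) = {y ∈ ℝⁿ : y₁² − Σ_{j=2}^{n} yⱼ² ≤ 1}. -/
theorem imagProj_two_sheeted_hyperboloid (n : ℕ) :
    {y : Fin (n + 3) → ℝ | ∃ z : Fin (n + 3) → ℂ,
        z 0 ^ 2 - (∑ j ∈ Finset.univ.erase 0, z j ^ 2) + 1 = 0 ∧
        (fun j => (z j).im) = y}
      = {y : Fin (n + 3) → ℝ | y 0 ^ 2 - (∑ j ∈ Finset.univ.erase 0, y j ^ 2) ≤ 1} := by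
  have hsqre : ∀ w : ℂ, (w ^ 2).re = w.re ^ 2 - w.im ^ 2 := by
    intro w; simp [pow_two, Complex.mul_re]
  have hsqim : ∀ w : ℂ, (w ^ 2).im = 2 * (w.re * w.im) := by
    intro w; simp [pow_two, Complex.mul_im]; ring
  ext y
  simp only [Set.mem_setOf_eq]
  constructor
  · rintro ⟨z, hz, rfl⟩
    set S := (Finset.univ.erase (0 : Fin (n + 3))) with hS
    set a := (z 0).re with ha
    set b := (z 0).im with hb
    set Sx := ∑ j ∈ S, (z j).re ^ 2 with hSxd
    set Sy := ∑ j ∈ S, (z j).im ^ 2 with hSyd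
    set P := ∑ j ∈ S, (z j).re * (z j).im with hPd
    have hre : a ^ 2 - b ^ 2 - (Sx - Sy) + 1 = 0 := by
      have h := congrArg Complex.re hz
      simpa [Complex.add_re, Complex.sub_re, Complex.re_sum, hsqre,
        Finset.sum_sub_distrib] using h
    have him : 2 * (a * b) - 2 * P = 0 := by
      have h := congrArg Complex.im hz
      simpa [Complex.add_im, Complex.sub_im, Complex.im_sum, hsqim,
        ← Finset.mul_sum] using h
    have hcs : P ^ 2 ≤ Sx * Sy :=
      Finset.sum_mul_sq_le_sq_mul_sq S (fun j => (z j).re) (fun j => (z j).im)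
    have hSx : 0 ≤ Sx := Finset.sum_nonneg fun _ _ => sq_nonneg _
    have hSy : 0 ≤ Sy := Finset.sum_nonneg fun _ _ => sq_nonneg _
    show b ^ 2 - Sy ≤ 1
    by_contra hgt
    push_neg at hgt
    have hab : a * b = P := by linarith
    have ha2 : a ^ 2 = Sx + (b ^ 2 - Sy - 1) := by linarith
    have hD : 0 < b ^ 2 - Sy - 1 := by linarith
    have hb2 : 0 < b ^ 2 := by linarith
    have h2 : (Sx + (b ^ 2 - Sy - 1)) * b ^ 2 ≤ Sx * Sy := by
      calc (Sx + (b ^ 2 - Sy - 1)) * b ^ 2 = a ^ 2 * b ^ 2 := by rw [ha2]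
        _ = P ^ 2 := by rw [← hab]; ring
        _ ≤ Sx * Sy := hcs
    have p1 : 0 < (b ^ 2 - Sy - 1) * b ^ 2 := mul_pos hD hb2
    have p2 : 0 ≤ Sx * (b ^ 2 - Sy - 1) := mul_nonneg hSx hD.le
    nlinarith [h2, p1, p2, hSx]
  · intro hy
    set S := (Finset.univ.erase (0 : Fin (n + 3))) with hS
    set i1 : Fin (n + 3) := ⟨1, by omega⟩ with hi1
    set i2 : Fin (n + 3) := ⟨2, by omega⟩ with hi2
    have h01 : (0 : Fin (n + 3)) ≠ i1 := by simp [hi1, Fin.ext_iff]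
    have h02 : (0 : Fin (n + 3)) ≠ i2 := by simp [hi2, Fin.ext_iff]
    have h12 : i1 ≠ i2 := by simp [hi1, hi2, Fin.ext_iff]
    have hm1 : i1 ∈ S := Finset.mem_erase.mpr ⟨Ne.symm h01, Finset.mem_univ _⟩
    have hm2 : i2 ∈ S := Finset.mem_erase.mpr ⟨Ne.symm h02, Finset.mem_univ _⟩
    have key : ∀ g : Fin (n + 3) → ℝ, (∀ j, j ≠ i1 → j ≠ i2 → g j = 0) →
        ∑ j ∈ S, g j = g i1 + g i2 := by
      intro g hg
      have hsub : ({i1, i2} : Finset (Fin (n + 3))) ⊆ S := by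
        intro j hj
        rcases Finset.mem_insert.mp hj with rfl | hj
        · exact hm1
        · rcases Finset.mem_singleton.mp hj with rfl
          exact hm2
      rw [← Finset.sum_subset hsub]
      · exact Finset.sum_pair h12
      · intro j _ hj
        simp only [Finset.mem_insert, Finset.mem_singleton] at hj
        push_neg at hj
        exact hg j hj.1 hj.2
    set r := Real.sqrt (1 - (y 0 ^ 2 - ∑ j ∈ S, y j ^ 2)) with hrd
    have hr2 : r ^ 2 = 1 - (y 0 ^ 2 - ∑ j ∈ S, y j ^ 2) :=
      Real.sq_sqrt (by linarith)
    set A := y i1 with hA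
    set B := y i2 with hB
    obtain ⟨c1, c2, hsum, horth⟩ :
        ∃ c1 c2 : ℝ, c1 ^ 2 + c2 ^ 2 = r ^ 2 ∧ c1 * A + c2 * B = 0 := by
      by_cases h : A = 0 ∧ B = 0
      · exact ⟨r, 0, by ring, by rw [h.1, h.2]; ring⟩
      · have hs2 : 0 < A ^ 2 + B ^ 2 := by
          rcases lt_or_eq_of_le (by positivity : (0:ℝ) ≤ A ^ 2 + B ^ 2) with h' | h'
          · exact h'
          · exfalso
            apply h
            have hA0 : A = 0 := sq_eq_zero_iff.mp
              (le_antisymm (by nlinarith [sq_nonneg B]) (sq_nonneg A))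
            have hB0 : B = 0 := sq_eq_zero_iff.mp
              (le_antisymm (by nlinarith [sq_nonneg A]) (sq_nonneg B))
            exact ⟨hA0, hB0⟩
        set t := r / Real.sqrt (A ^ 2 + B ^ 2) with ht
        have hst : Real.sqrt (A ^ 2 + B ^ 2) ^ 2 = A ^ 2 + B ^ 2 :=
          Real.sq_sqrt hs2.le
        have hsne : Real.sqrt (A ^ 2 + B ^ 2) ≠ 0 :=
          ne_of_gt (Real.sqrt_pos.mpr hs2)
        refine ⟨-B * t, A * t, ?_, by ring⟩
        have : t ^ 2 = r ^ 2 / (A ^ 2 + B ^ 2) := by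
          rw [ht, div_pow, hst]
        calc (-B * t) ^ 2 + (A * t) ^ 2 = (A ^ 2 + B ^ 2) * t ^ 2 := by ring
          _ = (A ^ 2 + B ^ 2) * (r ^ 2 / (A ^ 2 + B ^ 2)) := by rw [this]
          _ = r ^ 2 := by field_simp
    set x : Fin (n + 3) → ℝ := fun j => if j = i1 then c1 else if j = i2 then c2 else 0
      with hx
    have hx0 : x 0 = 0 := by simp [hx, h01, h02]
    have hx1 : x i1 = c1 := by simp [hx]
    have hx2 : x i2 = c2 := by simp [hx, h12.symm]
    have hxz : ∀ j, j ≠ i1 → j ≠ i2 → x j = 0 := by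
      intro j hj1 hj2; simp [hx, hj1, hj2]
    refine ⟨fun j => ⟨x j, y j⟩, ?_, funext fun j => rfl⟩
    have hsumsq : ∑ j ∈ S, x j ^ 2 = r ^ 2 := by
      rw [key (fun j => x j ^ 2)
        (fun j hj1 hj2 => by show x j ^ 2 = 0; rw [hxz j hj1 hj2]; ring)]
      show x i1 ^ 2 + x i2 ^ 2 = r ^ 2
      rw [hx1, hx2, hsum]
    have hsummul : ∑ j ∈ S, x j * y j = 0 := by
      rw [key (fun j => x j * y j)
        (fun j hj1 hj2 => by show x j * y j = 0; rw [hxz j hj1 hj2]; ring)]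
      show x i1 * y i1 + x i2 * y i2 = 0
      rw [hx1, hx2]
      exact horth
    apply Complex.ext
    · simp only [Complex.add_re, Complex.sub_re, Complex.re_sum, Complex.one_re, hsqre,
        Finset.sum_sub_distrib, hsumsq]
      show x 0 ^ 2 - y 0 ^ 2 - (r ^ 2 - ∑ j ∈ S, y j ^ 2) + 1 = 0
      rw [hx0]
      linarith [hr2]
    · simp only [Complex.add_im, Complex.sub_im, Complex.im_sum, Complex.one_im, hsqim,
        ← Finset.mul_sum, hsummul]
      show 2 * (x 0 * y 0) - 2 * 0 + 0 = Complex.im 0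
      rw [hx0]
      simp
end

section
/- Let f(z₁,z₂) = z₁·z₂ + β·z₁ + γ·z₂ + δ with β, γ, δ real and δ − βγ ≠ 0. Then 𝓘(f) = {(y₁,y₂) ∈ ℝ² : 0 < y₁·y₂/(δ − βγ) ≤ 1} ∪ {(0,0)}. Consequently, f is stable if and only if βγ − δ ≥ 0. -/
/-! The substitution `w₁ = z₁ + γ`, `w₂ = z₂ + β` keeps imaginary parts and turns `f` into
`w₁ w₂ + c` with `c = δ - βγ`. On a root, `w₂ = -c / w₁` has imaginary part `c y₁ / |w₁|²`, so
`y₁ y₂ / c = y₁² / |w₁|²`, which lies in `(0, 1]` unless `y₁ = 0 = y₂`; varying `Re w₁` attains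
every value in `(0, 1]`. -/

open Complex

lemma Complex.im_neg_ofReal_div (c : ℝ) (w : ℂ) : (-(c : ℂ) / w).im = c * w.im / normSq w := by
  simp [div_im, neg_div]

lemma Complex.im_eq_of_mul_eq_neg_ofReal {c : ℝ} {w₁ w₂ : ℂ} (hw₁ : w₁ ≠ 0)
    (hw : w₁ * w₂ = -c) : w₂.im = c * w₁.im / normSq w₁ := by
  rw [eq_div_of_mul_eq (a := w₂) hw₁ (by rw [mul_comm, hw]), im_neg_ofReal_div]

lemma Complex.exists_mul_eq_neg_ofReal_im_iff {c : ℝ} (hc : c ≠ 0) (y₁ y₂ : ℝ) :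
    (∃ w₁ w₂ : ℂ, w₁ * w₂ = -c ∧ w₁.im = y₁ ∧ w₂.im = y₂) ↔
      (0 < y₁ * y₂ / c ∧ y₁ * y₂ / c ≤ 1) ∨ (y₁ = 0 ∧ y₂ = 0) := by
  constructor
  · rintro ⟨w₁, w₂, hw, rfl, rfl⟩
    have hw₁ : w₁ ≠ 0 := by
      rintro rfl
      exact hc (by simpa using hw)
    have hn := normSq_pos.2 hw₁
    have him₂ := im_eq_of_mul_eq_neg_ofReal hw₁ hw
    by_cases hy₁ : w₁.im = 0
    · exact Or.inr ⟨hy₁, by rw [him₂, hy₁, mul_zero, zero_div]⟩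
    have hratio : w₁.im * w₂.im / c = w₁.im ^ 2 / normSq w₁ := by
      rw [him₂]
      field_simp
    refine Or.inl ⟨by rw [hratio]; positivity, ?_⟩
    rw [hratio, div_le_one hn, normSq_apply]
    nlinarith [mul_self_nonneg w₁.re]
  · rintro (⟨hpos, hle⟩ | ⟨rfl, rfl⟩)
    · have hy₁ : y₁ ≠ 0 := by rintro rfl; simp at hpos
      have hy₂ : y₂ ≠ 0 := by rintro rfl; simp at hpos
      have hs : 0 ≤ c / (y₁ * y₂) - 1 := by
        rw [sub_nonneg, ← inv_div]
        exact (one_le_inv₀ hpos).2 hle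
      set w₁ : ℂ := ⟨y₁ * √(c / (y₁ * y₂) - 1), y₁⟩
      have hw₁ : w₁ ≠ 0 := fun h => hy₁ (congrArg im h)
      have hn : normSq w₁ = c * y₁ / y₂ := by
        rw [normSq_mk, mul_mul_mul_comm, Real.mul_self_sqrt hs]
        field_simp
        ring
      refine ⟨w₁, -c / w₁, mul_div_cancel₀ _ hw₁, rfl, ?_⟩
      rw [im_neg_ofReal_div, hn, show w₁.im = y₁ from rfl]
      field_simp
    · exact ⟨1, -c, by simp, by simp, by simp⟩

lemma Complex.exists_mul_eq_neg_ofReal_im_pos_iff {c : ℝ} :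
    (∃ w₁ w₂ : ℂ, w₁ * w₂ = -c ∧ 0 < w₁.im ∧ 0 < w₂.im) ↔ 0 < c := by
  constructor
  · rintro ⟨w₁, w₂, hw, hy₁, hy₂⟩
    have hw₁ : w₁ ≠ 0 := by rintro rfl; simp at hy₁
    rw [im_eq_of_mul_eq_neg_ofReal hw₁ hw] at hy₂
    exact pos_of_mul_pos_left ((div_pos_iff_of_pos_right (normSq_pos.2 hw₁)).1 hy₂) hy₁.le
  · intro hc
    refine ⟨√c * I, √c * I, ?_, by simpa using hc, by simpa using hc⟩
    rw [mul_mul_mul_comm, ← ofReal_mul, Real.mul_self_sqrt hc.le, I_mul_I, mul_neg_one]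

lemma exists_bilinear_root_iff_exists_mul_eq (β γ δ : ℝ) (P : ℝ → ℝ → Prop) :
    (∃ z₁ z₂ : ℂ, z₁ * z₂ + β * z₁ + γ * z₂ + δ = 0 ∧ P z₁.im z₂.im) ↔
      ∃ w₁ w₂ : ℂ, w₁ * w₂ = -((δ - β * γ : ℝ) : ℂ) ∧ P w₁.im w₂.im := by
  push_cast
  constructor
  · rintro ⟨z₁, z₂, hz, hP⟩
    exact ⟨z₁ + γ, z₂ + β, by linear_combination hz, by simpa using hP⟩
  · rintro ⟨w₁, w₂, hw, hP⟩
    exact ⟨w₁ - γ, w₂ - β, by linear_combination hw, by simpa using hP⟩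

theorem imagProj_multilinear_bivariate (β γ δ : ℝ) (h : δ - β * γ ≠ 0) :
    ({p : ℝ × ℝ | ∃ z₁ z₂ : ℂ,
        z₁ * z₂ + β * z₁ + γ * z₂ + δ = 0 ∧ z₁.im = p.1 ∧ z₂.im = p.2}
      = {p : ℝ × ℝ | 0 < p.1 * p.2 / (δ - β * γ) ∧ p.1 * p.2 / (δ - β * γ) ≤ 1}
          ∪ {((0 : ℝ), (0 : ℝ))})
    ∧ ((¬ ∃ z₁ z₂ : ℂ,
          z₁ * z₂ + β * z₁ + γ * z₂ + δ = 0 ∧ 0 < z₁.im ∧ 0 < z₂.im)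
        ↔ 0 ≤ β * γ - δ) := by
  refine ⟨?_, ?_⟩
  · ext ⟨y₁, y₂⟩
    simp only [Set.mem_ofPred_eq, Set.mem_union, Set.mem_singleton_iff, Prod.mk.injEq]
    exact (exists_bilinear_root_iff_exists_mul_eq β γ δ (fun a b => a = y₁ ∧ b = y₂)).trans
      (exists_mul_eq_neg_ofReal_im_iff h y₁ y₂)
  · rw [exists_bilinear_root_iff_exists_mul_eq β γ δ (fun a b => 0 < a ∧ 0 < b),
      exists_mul_eq_neg_ofReal_im_pos_iff, not_lt, sub_nonpos, sub_nonneg]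
end
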